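/- Let N be a positive even integer, let L be an integer with 0 < L < N and ⌈N/L⌉ ≥ 3, and let m1, m2, m3 be pairwise distinct integers with 0 ≤ m_j ≤ ⌈N/L⌉ − 1. Let w^(1), w^(2) ∈ ℂ^N be analytic windows such that ŵ^(1)_1 · ŵ^(1)_0 ≠ 0, ŵ^(1)_{N/2} · ŵ^(2)_{N/2} ≠ 0 and ŵ^(1)_0 · ŵ^(2)_{N/2} − ŵ^(2)_0 · ŵ^(1)_{N/2} ≠ 0. Then there exists a nonzero polynomial P in N variables with complex coefficients such that for every x ∈ ℝ^N with P(x) ≠ 0, the analytic signal z = A(x) is determined up to a global sign by its 3N/2 − 1 STFT magnitudes: for every analytic signal z̃ ∈ ℂ^N, if |ŷ^{w(1)}_{N/2, 0}(z̃)| = |ŷ^{w(1)}_{N/2, 0}(z)|, |ŷ^{w(2)}_{N/2, 0}(z̃)| = |ŷ^{w(2)}_{N/2, 0}(z)|, and |ŷ^{w(1)}_{k, m_j}(z̃)| = |ŷ^{w(1)}_{k, m_j}(z)| for all k = 1, …, N/2 − 1 and j = 1, 2, 3, then z̃ = z or z̃ = −z. -/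

import Mathlib

open Complex

/-- Discrete Fourier transform of a signal indexed by `ZMod N`. -/
noncomputable def dft {N : ℕ} (z : ZMod N → ℂ) (k : ZMod N) : ℂ :=
  ∑ n ∈ Finset.range N, z n *
    Complex.exp (-2 * (Real.pi : ℂ) * Complex.I * (k.val : ℂ) * (n : ℂ) / N)

/-- Short-time Fourier transform measurement `ŷ^w_{k,m}(z)` with window `w` and
separation parameter `L`. -/
noncomputable def stft {N : ℕ} (w : ZMod N → ℂ) (L : ℤ) (z : ZMod N → ℂ) (k m : ℤ) : ℂ :=
  ∑ n ∈ Finset.range N, z n * w ((m * L - n : ℤ) : ZMod N) *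
    Complex.exp (-2 * (Real.pi : ℂ) * Complex.I * (k : ℂ) * (n : ℂ) / N)

/-- The DFT of the analytic signal associated with a real signal `x`. -/
noncomputable def analyticHat (N : ℕ) (x : ZMod N → ℝ) (k : ℕ) : ℂ :=
  if N % 2 = 0 then
    if k = 0 then dft (fun n => (x n : ℂ)) 0
    else if k ≤ N / 2 - 1 then 2 * dft (fun n => (x n : ℂ)) (k : ZMod N)
    else if k = N / 2 then dft (fun n => (x n : ℂ)) ((N / 2 : ℕ) : ZMod N)
    else 0
  else
    if k = 0 then dft (fun n => (x n : ℂ)) 0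
    else if k ≤ (N - 1) / 2 then 2 * dft (fun n => (x n : ℂ)) (k : ZMod N)
    else 0

/-- The analytic signal `A(x)` of a real signal `x`, obtained by inverse DFT. -/
noncomputable def analyticSignal {N : ℕ} (x : ZMod N → ℝ) : ZMod N → ℂ :=
  fun n => (1 / N : ℂ) * ∑ k ∈ Finset.range N, analyticHat N x k *
    Complex.exp (2 * (Real.pi : ℂ) * Complex.I * (k : ℂ) * (n.val : ℂ) / N)

/-- A signal `z ∈ ℂ^N` is analytic if `z = A(x)` for some real signal `x`. -/
def IsAnalytic {N : ℕ} (z : ZMod N → ℂ) : Prop := ∃ x : ZMod N → ℝ, z = analyticSignal x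


/-!
Write `N = 2M` and let `a, ã` be the Fourier coefficients of the analytic signals `A(x)` and
`z̃`; they vanish above `M`, and `a₀, a_M` are real. Expanding the window in its own Fourier
series turns every STFT measurement into a short linear combination of these coefficients.
The two measurements at frequency `M` are real, so they fix `b₀ã_M + b_Mã₀` and `c₀ã_M + c_Mã₀`
up to signs `ε₁, ε₂`. At frequency `M - 1`, `μ |b₀a_{M-1} + b₁μa_M|²` is a quadratic polynomial
in the phase `μ`; three distinct phases determine its coefficients, and these rule out
`ε₁ ≠ ε₂` for generic `x`. With a common sign `ε` one gets `ã_M = εa_M`, `ã₀ = εa₀`, and a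
descending induction on the frequency recovers every `ã_k = εa_k`: the three measurements at `k`
put `ε b₀ ã_k - b₀ a_k` on three circles through `0` whose centres are, generically, not
collinear. All genericity conditions are polynomial in the samples of `x`, and each is nonzero
at a complex point whose Fourier transform is supported on a pair of frequencies `±i`.
-/

open Finset ComplexConjugate
open scoped ZMod

section Fourier

variable {N : ℕ} [NeZero N]

lemma sum_range_natCast_eq_sum {M : Type*} [AddCommMonoid M] (f : ZMod N → M) :
    ∑ n ∈ range N, f n = ∑ t, f t :=
  sum_nbij' (fun n => (n : ZMod N)) ZMod.val (by simp) (by simp [ZMod.val_lt])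
    (fun n hn => ZMod.val_cast_of_lt (mem_range.1 hn)) (by simp) (by simp)

lemma dft_eq_zmodDFT (z : ZMod N → ℂ) : dft z = 𝓕 z := by
  ext k
  rw [dft, ZMod.dft_apply, ← sum_range_natCast_eq_sum]
  refine sum_congr rfl fun n _ => ?_
  have : -((n : ZMod N) * k) = ((-((n : ℤ) * (k.val : ℤ)) : ℤ) : ZMod N) := by push_cast; simp
  rw [this, ZMod.stdAddChar_coe, smul_eq_mul, mul_comm]
  congr 2; push_cast; ring

lemma analyticSignal_eq_invDFT (x : ZMod N → ℝ) :
    analyticSignal x = 𝓕⁻ (fun k => analyticHat N x k.val) := by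
  ext n
  rw [analyticSignal, ZMod.invDFT_apply, ← sum_range_natCast_eq_sum, smul_eq_mul, one_div]
  congr 1
  refine sum_congr rfl fun k hk => ?_
  have : ((k : ZMod N) * n) = (((k : ℤ) * (n.val : ℤ) : ℤ) : ZMod N) := by push_cast; simp
  rw [this, ZMod.stdAddChar_coe, smul_eq_mul, mul_comm, ZMod.val_cast_of_lt (mem_range.1 hk)]
  congr 2; push_cast; ring

lemma zmodDFT_analyticSignal (x : ZMod N → ℝ) (k : ZMod N) :
    𝓕 (analyticSignal x) k = analyticHat N x k.val := by
  rw [analyticSignal_eq_invDFT, LinearEquiv.apply_symm_apply]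

lemma analyticSignal_eq_smul {x x' : ZMod N → ℝ} {ε : ℂ}
    (h : ∀ j, analyticHat N x' j = ε * analyticHat N x j) :
    analyticSignal x' = ε • analyticSignal x := by
  rw [analyticSignal_eq_invDFT, analyticSignal_eq_invDFT, ← map_smul]
  congr 1
  ext k
  simp [h]

lemma conj_zmodDFT_ofReal (x : ZMod N → ℝ) (k : ZMod N) :
    conj (𝓕 (fun n => (x n : ℂ)) k) = 𝓕 (fun n => (x n : ℂ)) (-k) := by
  simp [ZMod.dft_apply, ← AddChar.map_neg_eq_conj]

lemma stft_eq_sum_zmod (w : ZMod N → ℂ) (L : ℤ) (z : ZMod N → ℂ) (k m : ℤ) :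
    stft w L z k m =
      ∑ t, z t * w (((m * L : ℤ) : ZMod N) - t) * ZMod.stdAddChar (-(t * (k : ZMod N))) := by
  rw [stft, ← sum_range_natCast_eq_sum]
  refine sum_congr rfl fun n _ => ?_
  have : -((n : ZMod N) * k) = ((-((n : ℤ) * k) : ℤ) : ZMod N) := by push_cast; ring
  rw [this, ZMod.stdAddChar_coe]
  push_cast
  congr 2; ring

lemma stft_eq_sum_dft (w : ZMod N → ℂ) (L : ℤ) (z : ZMod N → ℂ) (k m : ℤ) :
    stft w L z k m = (N : ℂ)⁻¹ * ∑ l, 𝓕 w l * ZMod.stdAddChar (l * ((m * L : ℤ) : ZMod N)) *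
      𝓕 z (l + k) := by
  obtain ⟨W, hW⟩ : ∃ W, 𝓕 w = W := ⟨_, rfl⟩
  have hw : ∀ t, w t = (N : ℂ)⁻¹ * ∑ l, ZMod.stdAddChar (l * t) * W l := fun t => by
    rw [← hW]
    simpa using ZMod.invDFT_apply (𝓕 w) t
  rw [hW, stft_eq_sum_zmod]
  simp only [hw, ZMod.dft_apply, smul_eq_mul, mul_sum, sum_mul]
  rw [sum_comm]
  refine sum_congr rfl fun l _ => sum_congr rfl fun t _ => ?_
  rw [show l * (((m * L : ℤ) : ZMod N) - t) = l * ((m * L : ℤ) : ZMod N) + -(t * l) by ring,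
    show -(t * (l + k)) = -(t * l) + -(t * k) by ring, AddChar.map_add_eq_mul,
    AddChar.map_add_eq_mul]
  ring

noncomputable def shiftPhase (N : ℕ) [NeZero N] (L m : ℤ) : ℂ :=
  ZMod.stdAddChar ((m * L : ℤ) : ZMod N)

lemma norm_shiftPhase (L m : ℤ) : ‖shiftPhase N L m‖ = 1 := AddChar.norm_apply _ _

lemma injOn_shiftPhase {L : ℤ} (hL : 0 < L) :
    Set.InjOn (shiftPhase N L) (Set.Icc 0 (⌈(N : ℚ) / L⌉ - 1)) := by
  intro m hm m' hm' h
  have hCL : (⌈(N : ℚ) / L⌉ - 1) * L < N := by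
    have h1 : ((⌈(N : ℚ) / L⌉ - 1 : ℤ) : ℚ) < N / L := by
      push_cast; linarith [Int.ceil_lt_add_one ((N : ℚ) / L)]
    rw [lt_div_iff₀ (by exact_mod_cast hL)] at h1
    exact_mod_cast h1
  have hdvd : (N : ℤ) ∣ m' * L - m * L :=
    (ZMod.intCast_eq_intCast_iff_dvd_sub _ _ _).1 (ZMod.injective_stdAddChar h)
  have := Int.eq_zero_of_abs_lt_dvd hdvd (by
    rw [abs_lt]; constructor <;> nlinarith [hm.1, hm.2, hm'.1, hm'.2])
  nlinarith

end Fourier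

section EvenLength

variable {N M : ℕ} [NeZero N]

noncomputable def analyticWeight (M j : ℕ) : ℂ :=
  if j = 0 ∨ j = M then 1 else if j < M then 2 else 0

lemma conj_analyticWeight (M j : ℕ) : conj (analyticWeight M j) = analyticWeight M j := by
  unfold analyticWeight; split_ifs <;> simp [map_ofNat]

lemma analyticWeight_ne_zero {j : ℕ} (hj : j ≤ M) : analyticWeight M j ≠ 0 := by
  unfold analyticWeight; split_ifs <;> first | omega | norm_num

lemma analyticHat_eq_weight_mul (hNM : N = 2 * M) (x : ZMod N → ℝ) (j : ℕ) :
    analyticHat N x j = analyticWeight M j * 𝓕 (fun n => (x n : ℂ)) j := by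
  have hM : N / 2 = M := by omega
  have hM0 : M ≠ 0 := by have := NeZero.ne N; omega
  simp only [analyticHat, analyticWeight, dft_eq_zmodDFT, hM, show N % 2 = 0 by omega, if_true]
  by_cases h0 : j = 0
  · simp [h0]
  by_cases hM' : j = M
  · simp [hM', hM0, show ¬ M ≤ M - 1 by omega]
  · by_cases hlt : j < M
    · simp [h0, hM', hlt, show j ≤ M - 1 by omega]
    · simp [h0, hM', hlt, show ¬ j ≤ M - 1 by omega]

lemma conj_analyticHat (hNM : N = 2 * M) (x : ZMod N → ℝ) (j : ℕ) :
    conj (analyticHat N x j) = analyticWeight M j * 𝓕 (fun n => (x n : ℂ)) (-(j : ZMod N)) := by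
  rw [analyticHat_eq_weight_mul hNM, map_mul, conj_analyticWeight, conj_zmodDFT_ofReal]

/-- `a j` plays the role of the DFT coefficient `â_j` of an analytic signal of length `2M`. -/
structure IsAnalyticCoeffs (M : ℕ) (a : ℕ → ℂ) : Prop where
  conj_zero : conj (a 0) = a 0
  conj_top : conj (a M) = a M
  eq_zero_of_lt : ∀ ⦃j⦄, M < j → a j = 0

lemma isAnalyticCoeffs_analyticHat (hNM : N = 2 * M) (x : ZMod N → ℝ) :
    IsAnalyticCoeffs M (analyticHat N x) where
  conj_zero := by rw [conj_analyticHat hNM, analyticHat_eq_weight_mul hNM]; simp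
  conj_top := by
    have : -(M : ZMod N) = M := by
      rw [neg_eq_iff_add_eq_zero, ← Nat.cast_add, show M + M = N by omega, ZMod.natCast_self]
    rw [conj_analyticHat hNM, analyticHat_eq_weight_mul hNM, this]
  eq_zero_of_lt j hj := by
    rw [analyticHat_eq_weight_mul hNM, analyticWeight, if_neg (by omega), if_neg (by omega),
      zero_mul]

def stftCoeffSum (M : ℕ) (b a : ℕ → ℂ) (k : ℕ) (μ : ℂ) : ℂ :=
  ∑ l ∈ range (M + 1), b l * μ ^ l * a (l + k)

lemma stft_analyticSignal_eq_sum_range (hNM : N = 2 * M) (y x : ZMod N → ℝ) (L : ℤ) (k : ℕ)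
    (m : ℤ) :
    stft (analyticSignal y) L (analyticSignal x) k m = (N : ℂ)⁻¹ *
      ∑ l ∈ range (M + 1), analyticHat N y l * shiftPhase N L m ^ l *
        analyticHat N x ((l + k) % N) := by
  have hy := isAnalyticCoeffs_analyticHat hNM y
  have hM : 0 < M := by have := NeZero.ne N; omega
  rw [stft_eq_sum_dft, ← sum_range_natCast_eq_sum]
  simp only [zmodDFT_analyticSignal]
  congr 1
  rw [← sum_subset (range_subset_range.2 (by omega : M + 1 ≤ N)) fun l hlN hl => by
    rw [ZMod.val_cast_of_lt (mem_range.1 hlN), hy.eq_zero_of_lt (by simpa using hl), zero_mul,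
      zero_mul]]
  refine sum_congr rfl fun l hl => ?_
  rw [ZMod.val_cast_of_lt (by have := mem_range.1 hl; omega), ← nsmul_eq_mul,
    AddChar.map_nsmul_eq_pow, Int.cast_natCast, ← Nat.cast_add, ZMod.val_natCast, shiftPhase]

lemma stft_analyticSignal_of_lt (hNM : N = 2 * M) (y x : ZMod N → ℝ) (L : ℤ) {k : ℕ}
    (hk : k < M) (m : ℤ) :
    stft (analyticSignal y) L (analyticSignal x) k m =
      (N : ℂ)⁻¹ * stftCoeffSum M (analyticHat N y) (analyticHat N x) k (shiftPhase N L m) := by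
  rw [stft_analyticSignal_eq_sum_range hNM, stftCoeffSum]
  congr 1
  refine sum_congr rfl fun l hl => ?_
  rw [Nat.mod_eq_of_lt (by have := mem_range.1 hl; omega)]

lemma stft_analyticSignal_top (hNM : N = 2 * M) (y x : ZMod N → ℝ) (L : ℤ) :
    stft (analyticSignal y) L (analyticSignal x) M 0 = (N : ℂ)⁻¹ *
      (analyticHat N y 0 * analyticHat N x M + analyticHat N y M * analyticHat N x 0) := by
  have hx := isAnalyticCoeffs_analyticHat hNM x
  have hM : 0 < M := by have := NeZero.ne N; omega
  rw [stft_analyticSignal_eq_sum_range hNM, sum_eq_add_of_mem 0 M (by simp) (by simp) hM.ne]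
  · simp [shiftPhase, show M + M = N by omega, Nat.mod_eq_of_lt (show M < N by omega)]
  · intro l hl hl0
    rw [Nat.mod_eq_of_lt (show l + M < N by have := mem_range.1 hl; omega),
      hx.eq_zero_of_lt (by omega), mul_zero]

end EvenLength

section ComplexAlgebra

lemma eq_of_quadratic_eq_at_three {K : Type*} [Field K] {A B C A' B' C' q₁ q₂ q₃ : K}
    (h₁₂ : q₁ ≠ q₂) (h₁₃ : q₁ ≠ q₃) (h₂₃ : q₂ ≠ q₃)
    (h : ∀ q ∈ ({q₁, q₂, q₃} : Set K), A + B * q + C * q ^ 2 = A' + B' * q + C' * q ^ 2) :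
    A = A' ∧ B = B' ∧ C = C' := by
  have e₁ := h q₁ (by simp)
  have e₂ := h q₂ (by simp)
  have e₃ := h q₃ (by simp)
  have k₁₂ : (B - B') + (C - C') * (q₁ + q₂) = 0 :=
    (mul_eq_zero.1 (by linear_combination e₁ - e₂ : (q₁ - q₂) * _ = 0)).resolve_left
      (sub_ne_zero.2 h₁₂)
  have k₁₃ : (B - B') + (C - C') * (q₁ + q₃) = 0 :=
    (mul_eq_zero.1 (by linear_combination e₁ - e₃ : (q₁ - q₃) * _ = 0)).resolve_left
      (sub_ne_zero.2 h₁₃)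
  have hC : C - C' = 0 :=
    (mul_eq_zero.1 (by linear_combination k₁₂ - k₁₃ : (C - C') * (q₂ - q₃) = 0)).resolve_right
      (sub_ne_zero.2 h₂₃)
  refine ⟨?_, ?_, by linear_combination hC⟩
  · linear_combination e₁ - q₁ * k₁₂ + q₁ * q₂ * hC
  · linear_combination k₁₂ - (q₁ + q₂) * hC

/-- `cross p q = 2i · Im (p q̄)` vanishes exactly when `p` and `q` are `ℝ`-collinear. -/
def cross (p q : ℂ) : ℂ := p * conj q - conj p * q

lemma mul_conj_eq_of_norm_eq {z z' : ℂ} (h : ‖z‖ = ‖z'‖) : z * conj z = z' * conj z' := by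
  simp only [mul_conj, normSq_eq_norm_sq, h]

lemma mul_conj_eq_one_of_norm_eq_one {μ : ℂ} (h : ‖μ‖ = 1) : μ * conj μ = 1 := by
  simpa [h] using mul_conj_eq_of_norm_eq (z' := 1) (by simpa using h)

lemma exists_sign_of_norm_eq {z z' : ℂ} (hz : conj z = z) (hz' : conj z' = z')
    (h : ‖z'‖ = ‖z‖) : ∃ ε : ℂ, (ε = 1 ∨ ε = -1) ∧ z' = ε * z := by
  have : (z' - z) * (z' + z) = 0 := by
    linear_combination (by simpa [hz, hz'] using mul_conj_eq_of_norm_eq h : z' * z' = z * z)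
  rcases mul_eq_zero.1 this with h | h
  · exact ⟨1, .inl rfl, by linear_combination h⟩
  · exact ⟨-1, .inr rfl, by linear_combination h⟩

lemma cross_sub_sub_ne_zero {μ₁ μ₂ μ₃ : ℂ} (h₁ : ‖μ₁‖ = 1) (h₂ : ‖μ₂‖ = 1) (h₃ : ‖μ₃‖ = 1)
    (h₁₂ : μ₁ ≠ μ₂) (h₁₃ : μ₁ ≠ μ₃) (h₂₃ : μ₂ ≠ μ₃) : cross (μ₁ - μ₂) (μ₁ - μ₃) ≠ 0 := by
  intro h
  rw [cross, map_sub, map_sub] at h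
  have : (μ₁ - μ₂) * (μ₃ - μ₁) * (μ₂ - μ₃) = 0 := by
    linear_combination μ₁ * μ₂ * μ₃ * h
      - μ₂ * μ₃ * (μ₃ - μ₂) * mul_conj_eq_one_of_norm_eq_one h₁
      - μ₁ * μ₃ * (μ₁ - μ₃) * mul_conj_eq_one_of_norm_eq_one h₂
      - μ₁ * μ₂ * (μ₂ - μ₁) * mul_conj_eq_one_of_norm_eq_one h₃
  simp only [mul_eq_zero, sub_eq_zero] at this
  tauto

lemma eq_zero_of_norm_add_eq_norm {A₁ A₂ A₃ v : ℂ} (h₁ : ‖A₁ + v‖ = ‖A₁‖)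
    (h₂ : ‖A₂ + v‖ = ‖A₂‖) (h₃ : ‖A₃ + v‖ = ‖A₃‖) (hA : cross (A₁ - A₂) (A₁ - A₃) ≠ 0) :
    v = 0 := by
  have e₁ := mul_conj_eq_of_norm_eq h₁
  have e₂ := mul_conj_eq_of_norm_eq h₂
  have e₃ := mul_conj_eq_of_norm_eq h₃
  simp only [map_add] at e₁ e₂ e₃
  rw [cross, map_sub, map_sub] at hA
  refine (mul_eq_zero.1 (?_ : v * _ = 0)).resolve_right hA
  linear_combination (A₁ - A₂) * (e₁ - e₃) - (A₁ - A₃) * (e₁ - e₂)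

lemma eq_of_norm_add_mul_eq {β γ p q p' q' μ₁ μ₂ μ₃ : ℂ} (hβ : β ≠ 0) (hγ : γ ≠ 0)
    (hμ₁ : ‖μ₁‖ = 1) (hμ₂ : ‖μ₂‖ = 1) (hμ₃ : ‖μ₃‖ = 1)
    (h₁₂ : μ₁ ≠ μ₂) (h₁₃ : μ₁ ≠ μ₃) (h₂₃ : μ₂ ≠ μ₃)
    (h : ∀ μ ∈ ({μ₁, μ₂, μ₃} : Set ℂ), ‖β * p' + γ * μ * q'‖ = ‖β * p + γ * μ * q‖) :
    p' * conj q' = p * conj q ∧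
      β * conj β * (p' * conj p') + γ * conj γ * (q' * conj q') =
        β * conj β * (p * conj p) + γ * conj γ * (q * conj q) := by
  -- on the unit circle, `μ |β p + γ μ q|²` is a quadratic polynomial in `μ`
  have expand : ∀ p q μ : ℂ, μ * conj μ = 1 →
      (β * p + γ * μ * q) * conj (β * p + γ * μ * q) * μ =
        β * conj γ * (p * conj q) +
          (β * conj β * (p * conj p) + γ * conj γ * (q * conj q)) * μ +
          conj β * γ * (conj p * q) * μ ^ 2 := fun p q μ hμ => by
    simp only [map_add, map_mul]
    linear_combination (β * conj γ * p * conj q + γ * conj γ * q * conj q * μ) * hμ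
  have hquad : ∀ μ ∈ ({μ₁, μ₂, μ₃} : Set ℂ),
      β * conj γ * (p' * conj q') +
          (β * conj β * (p' * conj p') + γ * conj γ * (q' * conj q')) * μ +
          conj β * γ * (conj p' * q') * μ ^ 2 =
        β * conj γ * (p * conj q) +
          (β * conj β * (p * conj p) + γ * conj γ * (q * conj q)) * μ +
          conj β * γ * (conj p * q) * μ ^ 2 := fun μ hμ => by
    have hu : μ * conj μ = 1 := by
      rcases hμ with rfl | rfl | rfl <;> exact mul_conj_eq_one_of_norm_eq_one ‹_›
    rw [← expand p' q' μ hu, ← expand p q μ hu, mul_conj_eq_of_norm_eq (h μ hμ)]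
  obtain ⟨h₀, h₁, -⟩ := eq_of_quadratic_eq_at_three h₁₂ h₁₃ h₂₃ hquad
  exact ⟨mul_left_cancel₀ (mul_ne_zero hβ ((map_ne_zero _).2 hγ)) h₀, h₁⟩

end ComplexAlgebra

/-! The genericity conditions are stated over any `ℂ`-algebra `R`, with `a'` standing for the
conjugate sequence: for `R = ℂ` and `a' = conj ∘ a` they are conditions on a signal, for
`R = MvPolynomial (ZMod N) ℂ` they are polynomials in its samples. -/

section GenericityConditions

variable {R S : Type*} [CommRing R] [Algebra ℂ R] [CommRing S] [Algebra ℂ S]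
  (M : ℕ) (b c : ℕ → ℂ)

/-- If the two top measurements determine `b₀ã_M + b_Mã₀` and `c₀ã_M + c_Mã₀` up to opposite
signs, then `(b₀c_M - c₀b_M) ã_M = ± topCombination a`. -/
def topCombination (a : ℕ → R) : R := (c M * b 0 + b M * c 0) • a M + (2 * b M * c M) • a 0

def topCondition (a : ℕ → R) : R :=
  (b 0 * c M - c 0 * b M) ^ 2 • a M ^ 2 - topCombination M b c a ^ 2

def predTopCondition (a a' : ℕ → R) : R :=
  (b 1 * conj (b 1)) • topCombination M b c a ^ 2 -
    (b 0 * conj (b 0) * (b 0 * c M - c 0 * b M) ^ 2) • (a (M - 1) * a' (M - 1))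

def shiftSum (β : ℕ → ℂ) (k : ℕ) (a : ℕ → R) : R := ∑ l ∈ range M, β l • a (l + 1 + k)

def phaseDiff (ν ν' : ℂ) (l : ℕ) : ℂ := b (l + 1) * (ν ^ (l + 1) - ν' ^ (l + 1))

def midCondition (μ₁ μ₂ μ₃ : ℂ) (k : ℕ) (a a' : ℕ → R) : R :=
  shiftSum M (phaseDiff b μ₁ μ₂) k a * shiftSum M (conj ∘ phaseDiff b μ₁ μ₃) k a' -
    shiftSum M (conj ∘ phaseDiff b μ₁ μ₂) k a' * shiftSum M (phaseDiff b μ₁ μ₃) k a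

def genericityCondition (μ₁ μ₂ μ₃ : ℂ) (a a' : ℕ → R) : R :=
  topCondition M b c a * predTopCondition M b c a a' *
    ∏ k ∈ Icc 1 (M - 1), midCondition M b μ₁ μ₂ μ₃ k a a'

variable (f : R →ₐ[ℂ] S)

lemma map_topCondition (a : ℕ → R) :
    f (topCondition M b c a) = topCondition M b c (f ∘ a) := by
  simp [topCondition, topCombination]

lemma map_predTopCondition (a a' : ℕ → R) :
    f (predTopCondition M b c a a') = predTopCondition M b c (f ∘ a) (f ∘ a') := by
  simp [predTopCondition, topCombination]

lemma map_midCondition (μ₁ μ₂ μ₃ : ℂ) (k : ℕ) (a a' : ℕ → R) :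
    f (midCondition M b μ₁ μ₂ μ₃ k a a') = midCondition M b μ₁ μ₂ μ₃ k (f ∘ a) (f ∘ a') := by
  simp [midCondition, shiftSum, map_sum]

lemma map_genericityCondition (μ₁ μ₂ μ₃ : ℂ) (a a' : ℕ → R) :
    f (genericityCondition M b c μ₁ μ₂ μ₃ a a') =
      genericityCondition M b c μ₁ μ₂ μ₃ (f ∘ a) (f ∘ a') := by
  simp [genericityCondition, map_topCondition, map_predTopCondition, map_midCondition]

lemma midCondition_conj (μ₁ μ₂ μ₃ : ℂ) (k : ℕ) (a : ℕ → ℂ) :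
    midCondition M b μ₁ μ₂ μ₃ k a (conj ∘ a) =
      cross (shiftSum M (phaseDiff b μ₁ μ₂) k a) (shiftSum M (phaseDiff b μ₁ μ₃) k a) := by
  simp [midCondition, cross, shiftSum, map_sum]

end GenericityConditions

section Recovery

variable {M : ℕ} {b c a a' : ℕ → ℂ} {μ₁ μ₂ μ₃ : ℂ}

lemma stftCoeffSum_eq_add_shift (k : ℕ) (μ : ℂ) :
    stftCoeffSum M b a k μ =
      b 0 * a k + ∑ l ∈ range M, b (l + 1) * μ ^ (l + 1) * a (l + 1 + k) := by
  rw [stftCoeffSum, sum_range_succ', add_comm]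
  simp

lemma stftCoeffSum_sub (k : ℕ) (ν ν' : ℂ) :
    stftCoeffSum M b a k ν - stftCoeffSum M b a k ν' = shiftSum M (phaseDiff b ν ν') k a := by
  rw [stftCoeffSum_eq_add_shift, stftCoeffSum_eq_add_shift, shiftSum, add_sub_add_left_eq_sub,
    ← sum_sub_distrib]
  refine sum_congr rfl fun l _ => ?_
  rw [phaseDiff, smul_eq_mul]
  ring

lemma stftCoeffSum_pred_top (ha : IsAnalyticCoeffs M a) (hM : 1 ≤ M) (μ : ℂ) :
    stftCoeffSum M b a (M - 1) μ = b 0 * a (M - 1) + b 1 * μ * a M := by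
  rw [stftCoeffSum, sum_eq_add_of_mem 0 1 (by simp) (by simp; omega) one_ne_zero.symm]
  · simp [show 1 + (M - 1) = M by omega]
  · intro l hl hl01
    rw [ha.eq_zero_of_lt (by omega), mul_zero]

lemma eq_sign_mul_of_norm_stftCoeffSum_eq {k : ℕ} {ε : ℂ} (hε : ε = 1 ∨ ε = -1)
    (hb0 : b 0 ≠ 0) (hk : ∀ j, k < j → a' j = ε * a j)
    (h : ∀ μ ∈ ({μ₁, μ₂, μ₃} : Set ℂ), ‖stftCoeffSum M b a' k μ‖ = ‖stftCoeffSum M b a k μ‖)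
    (hW : cross (shiftSum M (phaseDiff b μ₁ μ₂) k a) (shiftSum M (phaseDiff b μ₁ μ₃) k a) ≠ 0) :
    a' k = ε * a k := by
  have hεε : ε * ε = 1 := by rcases hε with rfl | rfl <;> norm_num
  have hnorm : ∀ μ ∈ ({μ₁, μ₂, μ₃} : Set ℂ),
      ‖stftCoeffSum M b a k μ + b 0 * (ε * a' k - a k)‖ = ‖stftCoeffSum M b a k μ‖ := by
    intro μ hμ
    have hshift : ∑ l ∈ range M, b (l + 1) * μ ^ (l + 1) * a' (l + 1 + k) =
        ε * ∑ l ∈ range M, b (l + 1) * μ ^ (l + 1) * a (l + 1 + k) := by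
      rw [mul_sum]
      exact sum_congr rfl fun l _ => by rw [hk _ (by omega)]; ring
    have : stftCoeffSum M b a' k μ =
        ε * (stftCoeffSum M b a k μ + b 0 * (ε * a' k - a k)) := by
      rw [stftCoeffSum_eq_add_shift, stftCoeffSum_eq_add_shift, hshift]
      linear_combination (-(b 0 * a' k)) * hεε
    rw [← h μ hμ, this, norm_mul, show ‖ε‖ = 1 by rcases hε with rfl | rfl <;> simp, one_mul]
  have hv := eq_zero_of_norm_add_eq_norm (hnorm μ₁ (by simp)) (hnorm μ₂ (by simp))
    (hnorm μ₃ (by simp)) (by rwa [stftCoeffSum_sub, stftCoeffSum_sub])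
  have := (mul_eq_zero.1 hv).resolve_left hb0
  linear_combination ε * this - a' k * hεε

lemma sign_eq_sign_of_top {ε₁ ε₂ : ℂ} (hε₁ : ε₁ = 1 ∨ ε₁ = -1) (hε₂ : ε₂ = 1 ∨ ε₂ = -1)
    (ha : IsAnalyticCoeffs M a) (ha' : IsAnalyticCoeffs M a')
    (h3 : topCondition M b c a ≠ 0) (h4 : predTopCondition M b c a (conj ∘ a) ≠ 0)
    (hb' : b 0 * a' M + b M * a' 0 = ε₁ * (b 0 * a M + b M * a 0))
    (hc' : c 0 * a' M + c M * a' 0 = ε₂ * (c 0 * a M + c M * a 0))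
    (hE₁ : a' (M - 1) * a' M = a (M - 1) * a M)
    (hE₂ : b 0 * conj (b 0) * (a' (M - 1) * conj (a' (M - 1))) + b 1 * conj (b 1) * (a' M * a' M) =
      b 0 * conj (b 0) * (a (M - 1) * conj (a (M - 1))) + b 1 * conj (b 1) * (a M * a M)) :
    ε₁ = ε₂ := by
  by_contra hne
  have hε₂ : ε₂ = -ε₁ := by rcases hε₁ with rfl | rfl <;> rcases hε₂ with rfl | rfl <;> simp_all
  have hεε : ε₁ * ε₁ = 1 := by rcases hε₁ with rfl | rfl <;> norm_num
  set g := topCombination M b c a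
  set D := b 0 * c M - c 0 * b M
  have hDa' : D * a' M = ε₁ * g := by
    simp only [g, D, topCombination, smul_eq_mul]
    linear_combination c M * hb' - b M * hc' - b M * (c 0 * a M + c M * a 0) * hε₂
  have hsq : D ^ 2 * a' M ^ 2 = g ^ 2 := by
    linear_combination (D * a' M + ε₁ * g) * hDa' + g ^ 2 * hεε
  have hE₁c : conj (a' (M - 1)) * a' M = conj (a (M - 1)) * a M := by
    simpa [ha.conj_top, ha'.conj_top] using congrArg conj hE₁
  have hprod : a' (M - 1) * conj (a' (M - 1)) * a' M ^ 2 =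
      a (M - 1) * conj (a (M - 1)) * a M ^ 2 := by
    linear_combination (conj (a' (M - 1)) * a' M) * hE₁ + (a (M - 1) * a M) * hE₁c
  -- multiplying `hE₂` by `ã_M²` and substituting `hprod` factors the difference
  have key : (a M ^ 2 - a' M ^ 2) *
      (b 0 * conj (b 0) * (a (M - 1) * conj (a (M - 1))) - b 1 * conj (b 1) * a' M ^ 2) = 0 := by
    linear_combination a' M ^ 2 * hE₂ - b 0 * conj (b 0) * hprod
  rcases mul_eq_zero.1 key with h | h
  · exact h3 (by simp only [topCondition, smul_eq_mul]; linear_combination hsq + D ^ 2 * h)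
  · exact h4 (by
      simp only [predTopCondition, smul_eq_mul, Function.comp_apply]
      linear_combination -(b 1 * conj (b 1)) * hsq - D ^ 2 * h)

lemma eq_sign_mul_of_one_le (hM : 1 ≤ M) (ha : IsAnalyticCoeffs M a) (ha' : IsAnalyticCoeffs M a') {ε : ℂ}
    (hε : ε = 1 ∨ ε = -1) (hb0 : b 0 ≠ 0) (htop : a' M = ε * a M)
    (hW : ∀ k ∈ Icc 1 (M - 1),
      cross (shiftSum M (phaseDiff b μ₁ μ₂) k a) (shiftSum M (phaseDiff b μ₁ μ₃) k a) ≠ 0)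
    (hmid : ∀ k, 1 ≤ k → k ≤ M - 1 → ∀ μ ∈ ({μ₁, μ₂, μ₃} : Set ℂ),
      ‖stftCoeffSum M b a' k μ‖ = ‖stftCoeffSum M b a k μ‖) {j : ℕ} (hj : 1 ≤ j) :
    a' j = ε * a j := by
  refine Nat.decreasingInduction' (m := 1) (n := M) (P := fun k => ∀ j, k ≤ j → a' j = ε * a j)
    (fun k hkM hk ih j hj => ?_) hM (fun j hj => ?_) j hj
  · rcases hj.eq_or_lt with rfl | hj
    · exact eq_sign_mul_of_norm_stftCoeffSum_eq hε hb0 ih (hmid _ hk (by omega))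
        (hW _ (mem_Icc.2 ⟨hk, by omega⟩))
    · exact ih j hj
  · rcases hj.eq_or_lt with rfl | hj
    · exact htop
    · rw [ha.eq_zero_of_lt hj, ha'.eq_zero_of_lt hj, mul_zero]

theorem exists_sign_of_norm_stftCoeffSum_eq (hM : 2 ≤ M)
    (hb : IsAnalyticCoeffs M b) (hc : IsAnalyticCoeffs M c) (ha : IsAnalyticCoeffs M a)
    (ha' : IsAnalyticCoeffs M a') (hb0 : b 0 ≠ 0) (hb1 : b 1 ≠ 0) (hbM : b M ≠ 0)
    (hD : b 0 * c M - c 0 * b M ≠ 0) (hμ₁ : ‖μ₁‖ = 1) (hμ₂ : ‖μ₂‖ = 1) (hμ₃ : ‖μ₃‖ = 1)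
    (h₁₂ : μ₁ ≠ μ₂) (h₁₃ : μ₁ ≠ μ₃) (h₂₃ : μ₂ ≠ μ₃)
    (hgen : genericityCondition M b c μ₁ μ₂ μ₃ a (conj ∘ a) ≠ 0)
    (htop_b : ‖b 0 * a' M + b M * a' 0‖ = ‖b 0 * a M + b M * a 0‖)
    (htop_c : ‖c 0 * a' M + c M * a' 0‖ = ‖c 0 * a M + c M * a 0‖)
    (hmid : ∀ k, 1 ≤ k → k ≤ M - 1 → ∀ μ ∈ ({μ₁, μ₂, μ₃} : Set ℂ),
      ‖stftCoeffSum M b a' k μ‖ = ‖stftCoeffSum M b a k μ‖) :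
    ∃ ε : ℂ, (ε = 1 ∨ ε = -1) ∧ ∀ j, a' j = ε * a j := by
  simp only [genericityCondition, mul_ne_zero_iff, prod_ne_zero_iff] at hgen
  obtain ⟨⟨h3, h4⟩, h5⟩ := hgen
  have hreal : ∀ {β γ : ℕ → ℂ}, IsAnalyticCoeffs M β → IsAnalyticCoeffs M γ →
      conj (β 0 * γ M + β M * γ 0) = β 0 * γ M + β M * γ 0 := fun hβ hγ => by
    simp [hβ.conj_zero, hβ.conj_top, hγ.conj_zero, hγ.conj_top]
  obtain ⟨ε, hε, hb'⟩ := exists_sign_of_norm_eq (hreal hb ha) (hreal hb ha') htop_b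
  obtain ⟨ε₂, hε₂, hc'⟩ := exists_sign_of_norm_eq (hreal hc ha) (hreal hc ha') htop_c
  obtain ⟨hE₁, hE₂⟩ := eq_of_norm_add_mul_eq hb0 hb1 hμ₁ hμ₂ hμ₃ h₁₂ h₁₃ h₂₃ fun μ hμ => by
    simpa only [stftCoeffSum_pred_top ha (by omega), stftCoeffSum_pred_top ha' (by omega)] using
      hmid (M - 1) (by omega) le_rfl μ hμ
  rw [ha.conj_top, ha'.conj_top] at hE₁ hE₂
  obtain rfl := sign_eq_sign_of_top hε hε₂ ha ha' h3 h4 hb' hc' hE₁ hE₂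
  have htop : a' M = ε * a M :=
    mul_left_cancel₀ hD (by linear_combination c M * hb' - b M * hc')
  have hzero : a' 0 = ε * a 0 := mul_left_cancel₀ hbM (by linear_combination hb' - b 0 * htop)
  refine ⟨ε, hε, fun j => ?_⟩
  rcases j.eq_zero_or_pos with rfl | hj
  · exact hzero
  · exact eq_sign_mul_of_one_le (by omega) ha ha' hε hb0 htop
      (fun k hk => by rw [← midCondition_conj]; exact h5 k hk) hmid hj

theorem analyticSignal_eq_or_eq_neg_of_norm_stft_eq {N : ℕ} [NeZero N] (hNM : N = 2 * M)
    (hM : 2 ≤ M) {L m₁ m₂ m₃ : ℤ} {y₁ y₂ x x' : ZMod N → ℝ}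
    (hb0 : analyticHat N y₁ 0 ≠ 0) (hb1 : analyticHat N y₁ 1 ≠ 0)
    (hbM : analyticHat N y₁ M ≠ 0)
    (hD : analyticHat N y₁ 0 * analyticHat N y₂ M - analyticHat N y₂ 0 * analyticHat N y₁ M ≠ 0)
    (h₁₂ : shiftPhase N L m₁ ≠ shiftPhase N L m₂) (h₁₃ : shiftPhase N L m₁ ≠ shiftPhase N L m₃)
    (h₂₃ : shiftPhase N L m₂ ≠ shiftPhase N L m₃)
    (hgen : genericityCondition M (analyticHat N y₁) (analyticHat N y₂) (shiftPhase N L m₁)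
      (shiftPhase N L m₂) (shiftPhase N L m₃) (analyticHat N x) (conj ∘ analyticHat N x) ≠ 0)
    (htop₁ : ‖stft (analyticSignal y₁) L (analyticSignal x') M 0‖ =
      ‖stft (analyticSignal y₁) L (analyticSignal x) M 0‖)
    (htop₂ : ‖stft (analyticSignal y₂) L (analyticSignal x') M 0‖ =
      ‖stft (analyticSignal y₂) L (analyticSignal x) M 0‖)
    (hmid : ∀ k : ℕ, 1 ≤ k → k ≤ M - 1 → ∀ m ∈ ({m₁, m₂, m₃} : Set ℤ),
      ‖stft (analyticSignal y₁) L (analyticSignal x') k m‖ =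
        ‖stft (analyticSignal y₁) L (analyticSignal x) k m‖) :
    analyticSignal x' = analyticSignal x ∨ analyticSignal x' = -analyticSignal x := by
  have hNinv : ‖(N : ℂ)⁻¹‖ ≠ 0 := by simp [NeZero.ne N]
  simp only [stft_analyticSignal_top hNM, norm_mul, mul_right_inj' hNinv] at htop₁ htop₂
  have hmid' : ∀ k, 1 ≤ k → k ≤ M - 1 → ∀ m ∈ ({m₁, m₂, m₃} : Set ℤ),
      ‖stftCoeffSum M (analyticHat N y₁) (analyticHat N x') k (shiftPhase N L m)‖ =
        ‖stftCoeffSum M (analyticHat N y₁) (analyticHat N x) k (shiftPhase N L m)‖ :=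
    fun k hk1 hk2 m hm => by
      have := hmid k hk1 hk2 m hm
      rwa [stft_analyticSignal_of_lt hNM _ _ _ (by omega),
        stft_analyticSignal_of_lt hNM _ _ _ (by omega), norm_mul, norm_mul,
        mul_right_inj' hNinv] at this
  obtain ⟨ε, hε, h⟩ := exists_sign_of_norm_stftCoeffSum_eq hM
    (isAnalyticCoeffs_analyticHat hNM y₁) (isAnalyticCoeffs_analyticHat hNM y₂)
    (isAnalyticCoeffs_analyticHat hNM x) (isAnalyticCoeffs_analyticHat hNM x') hb0 hb1 hbM hD
    (norm_shiftPhase _ _) (norm_shiftPhase _ _) (norm_shiftPhase _ _) h₁₂ h₁₃ h₂₃ hgen htop₁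
    htop₂ fun k hk1 hk2 => by rintro _ (rfl | rfl | rfl) <;> exact hmid' k hk1 hk2 _ (by simp)
  rcases hε with rfl | rfl <;> simp [analyticSignal_eq_smul h]

end Recovery

section GenericityPolynomial

open MvPolynomial

variable {N M : ℕ} [NeZero N]

noncomputable def dftPoly (k : ZMod N) : MvPolynomial (ZMod N) ℂ :=
  ∑ n, C (ZMod.stdAddChar (-(n * k))) * X n

lemma aeval_dftPoly (v : ZMod N → ℂ) (k : ZMod N) : aeval v (dftPoly k) = 𝓕 v k := by
  simp [dftPoly, ZMod.dft_apply]

noncomputable def coeffPoly (M j : ℕ) : MvPolynomial (ZMod N) ℂ :=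
  C (analyticWeight M j) * dftPoly (j : ZMod N)

noncomputable def conjCoeffPoly (M j : ℕ) : MvPolynomial (ZMod N) ℂ :=
  C (analyticWeight M j) * dftPoly (-(j : ZMod N))

lemma aeval_comp_coeffPoly (hNM : N = 2 * M) (x : ZMod N → ℝ) :
    aeval (fun n => (x n : ℂ)) ∘ coeffPoly M = analyticHat N x := by
  ext j
  simp only [Function.comp_apply, coeffPoly, map_mul, aeval_C, aeval_dftPoly,
    analyticHat_eq_weight_mul hNM, Algebra.algebraMap_self, RingHom.id_apply]

lemma aeval_comp_conjCoeffPoly (hNM : N = 2 * M) (x : ZMod N → ℝ) :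
    aeval (fun n => (x n : ℂ)) ∘ conjCoeffPoly M = conj ∘ analyticHat N x := by
  ext j
  simp only [Function.comp_apply, conjCoeffPoly, map_mul, aeval_C, aeval_dftPoly,
    conj_analyticHat hNM, Algebra.algebraMap_self, RingHom.id_apply]

lemma natCast_eq_or_eq_neg_iff (hNM : N = 2 * M) {i j : ℕ} (hi : i ≤ M) (hj : j ≤ M) :
    ((j : ZMod N) = i ∨ (j : ZMod N) = -i) ↔ j = i := by
  have hM : 0 < M := by have := NeZero.ne N; omega
  refine ⟨fun h => ?_, fun h => .inl (by rw [h])⟩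
  rcases h with h | h
  · have := congrArg ZMod.val h
    rwa [ZMod.val_cast_of_lt (show i < N by omega), ZMod.val_cast_of_lt (show j < N by omega)]
      at this
  · rw [eq_neg_iff_add_eq_zero, ← Nat.cast_add, ZMod.natCast_eq_zero_iff] at h
    rcases (j + i).eq_zero_or_pos with h0 | hpos
    · omega
    · have := Nat.le_of_dvd hpos h
      omega

noncomputable def pairIndicator (i : ℕ) : ZMod N → ℂ := fun t => if t = i ∨ t = -i then 1 else 0

lemma aeval_comp_coeffPoly_pairIndicator (hNM : N = 2 * M) {i : ℕ} (hi : i ≤ M) :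
    aeval (𝓕⁻ (pairIndicator i)) ∘ coeffPoly (N := N) M = Pi.single i (analyticWeight M i) := by
  ext j
  simp only [Function.comp_apply, coeffPoly, map_mul, aeval_C, aeval_dftPoly,
    LinearEquiv.apply_symm_apply, pairIndicator, Pi.single_apply]
  by_cases hj : j ≤ M
  · simp only [natCast_eq_or_eq_neg_iff hNM hi hj]
    split_ifs with h <;> simp [h]
  · simp [analyticWeight, show ¬ (j = 0 ∨ j = M) by omega, show ¬ j < M by omega,
      show j ≠ i by omega]

lemma aeval_comp_conjCoeffPoly_pairIndicator (hNM : N = 2 * M) {i : ℕ} (hi : i ≤ M) :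
    aeval (𝓕⁻ (pairIndicator i)) ∘ conjCoeffPoly (N := N) M =
      Pi.single i (analyticWeight M i) := by
  rw [← aeval_comp_coeffPoly_pairIndicator hNM hi]
  ext j
  simp only [Function.comp_apply, coeffPoly, conjCoeffPoly, map_mul, aeval_C, aeval_dftPoly,
    LinearEquiv.apply_symm_apply, pairIndicator]
  exact congrArg _ (if_congr (by rw [neg_eq_iff_eq_neg, neg_inj, or_comm]) rfl rfl)

variable {b c : ℕ → ℂ}

lemma topCondition_single_ne_zero (hM : M ≠ 0) (hbM : b M ≠ 0) (hcM : c M ≠ 0) :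
    topCondition M b c (Pi.single 0 (1 : ℂ)) ≠ 0 := by
  simp [topCondition, topCombination, hM, hbM, hcM]

lemma predTopCondition_single_ne_zero (hM : 2 ≤ M) (hb0 : b 0 ≠ 0)
    (hD : b 0 * c M - c 0 * b M ≠ 0) {w : ℂ} (hw : w ≠ 0) :
    predTopCondition M b c (Pi.single (M - 1) w) (Pi.single (M - 1) w) ≠ 0 := by
  simp [predTopCondition, topCombination, show M ≠ M - 1 by omega, show M - 1 ≠ 0 by omega,
    hb0, hD, hw]

lemma shiftSum_single (hM : 0 < M) (β : ℕ → ℂ) (k : ℕ) (w : ℂ) :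
    shiftSum M β k (Pi.single (k + 1) w) = β 0 * w := by
  rw [shiftSum, sum_eq_single_of_mem 0 (mem_range.2 hM) fun l _ hl => by
    simp [show l + 1 + k ≠ k + 1 by omega]]
  simp [show 0 + 1 + k = k + 1 by omega]

lemma midCondition_single_ne_zero (hM : 0 < M) (hb1 : b 1 ≠ 0) {μ₁ μ₂ μ₃ : ℂ}
    (hμ₁ : ‖μ₁‖ = 1) (hμ₂ : ‖μ₂‖ = 1) (hμ₃ : ‖μ₃‖ = 1) (h₁₂ : μ₁ ≠ μ₂) (h₁₃ : μ₁ ≠ μ₃)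
    (h₂₃ : μ₂ ≠ μ₃) (k : ℕ) {w : ℂ} (hw : w ≠ 0) (hw' : conj w = w) :
    midCondition M b μ₁ μ₂ μ₃ k (Pi.single (k + 1) w) (Pi.single (k + 1) w) ≠ 0 := by
  have hconj : conj ∘ Pi.single (k + 1) w = Pi.single (k + 1) w := by
    ext j; by_cases hj : j = k + 1 <;> simp [hj, hw']
  have h := midCondition_conj M b μ₁ μ₂ μ₃ k (Pi.single (k + 1) w)
  rw [hconj] at h
  rw [h, shiftSum_single hM, shiftSum_single hM]
  have : cross (phaseDiff b μ₁ μ₂ 0 * w) (phaseDiff b μ₁ μ₃ 0 * w) =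
      b 1 * conj (b 1) * (w * conj w) * cross (μ₁ - μ₂) (μ₁ - μ₃) := by
    simp only [cross, phaseDiff, zero_add, pow_one, map_mul, map_sub]; ring
  rw [this]
  exact mul_ne_zero (by simp [hb1, hw]) (cross_sub_sub_ne_zero hμ₁ hμ₂ hμ₃ h₁₂ h₁₃ h₂₃)

noncomputable def genericityPoly (N M : ℕ) [NeZero N] (b c : ℕ → ℂ) (μ₁ μ₂ μ₃ : ℂ) :
    MvPolynomial (ZMod N) ℂ :=
  genericityCondition M b c μ₁ μ₂ μ₃ (coeffPoly M) (conjCoeffPoly M)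

lemma eval_genericityPoly (hNM : N = 2 * M) (μ₁ μ₂ μ₃ : ℂ) (x : ZMod N → ℝ) :
    eval (fun n => (x n : ℂ)) (genericityPoly N M b c μ₁ μ₂ μ₃) =
      genericityCondition M b c μ₁ μ₂ μ₃ (analyticHat N x) (conj ∘ analyticHat N x) := by
  rw [← aeval_eq_eval, genericityPoly, map_genericityCondition, aeval_comp_coeffPoly hNM,
    aeval_comp_conjCoeffPoly hNM]

theorem genericityPoly_ne_zero (hNM : N = 2 * M) (hM : 2 ≤ M) (hb0 : b 0 ≠ 0)
    (hb1 : b 1 ≠ 0) (hbM : b M ≠ 0) (hcM : c M ≠ 0) (hD : b 0 * c M - c 0 * b M ≠ 0)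
    {μ₁ μ₂ μ₃ : ℂ} (hμ₁ : ‖μ₁‖ = 1) (hμ₂ : ‖μ₂‖ = 1) (hμ₃ : ‖μ₃‖ = 1) (h₁₂ : μ₁ ≠ μ₂)
    (h₁₃ : μ₁ ≠ μ₃) (h₂₃ : μ₂ ≠ μ₃) : genericityPoly N M b c μ₁ μ₂ μ₃ ≠ 0 := by
  refine mul_ne_zero (mul_ne_zero ?_ ?_) (prod_ne_zero_iff.2 fun k hk => ?_)
  · refine ne_zero_of_map (f := aeval (𝓕⁻ (pairIndicator 0))) ?_
    rw [map_topCondition, aeval_comp_coeffPoly_pairIndicator hNM (Nat.zero_le _)]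
    simpa [analyticWeight] using topCondition_single_ne_zero (by omega) hbM hcM
  · refine ne_zero_of_map (f := aeval (𝓕⁻ (pairIndicator (M - 1)))) ?_
    rw [map_predTopCondition, aeval_comp_coeffPoly_pairIndicator hNM (by omega),
      aeval_comp_conjCoeffPoly_pairIndicator hNM (by omega)]
    exact predTopCondition_single_ne_zero hM hb0 hD (analyticWeight_ne_zero (by omega))
  · have hk := mem_Icc.1 hk
    refine ne_zero_of_map (f := aeval (𝓕⁻ (pairIndicator (k + 1)))) ?_
    rw [map_midCondition, aeval_comp_coeffPoly_pairIndicator hNM (by omega),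
      aeval_comp_conjCoeffPoly_pairIndicator hNM (by omega)]
    exact midCondition_single_ne_zero (by omega) hb1 hμ₁ hμ₂ hμ₃ h₁₂ h₁₃ h₂₃ k
      (analyticWeight_ne_zero (by omega)) (conj_analyticWeight M _)

end GenericityPolynomial

lemma two_mul_lt_of_three_le_ceil {N : ℕ} {L : ℤ} (hL : 0 < L) (h : 3 ≤ ⌈(N : ℚ) / L⌉) :
    2 * L < N := by
  have : ((2 : ℤ) : ℚ) < N / L := Int.lt_ceil.1 (by omega)
  rw [lt_div_iff₀ (by exact_mod_cast hL)] at this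
  exact_mod_cast this

theorem stft_pr_analytic_windows_general (N : ℕ) (hEven : N % 2 = 0)
    (L : ℤ) (hL0 : 0 < L) (hceil : 3 ≤ ⌈(N : ℚ) / (L : ℚ)⌉)
    (m1 m2 m3 : ℤ)
    (hm1 : 0 ≤ m1) (hm1' : m1 ≤ ⌈(N : ℚ) / (L : ℚ)⌉ - 1)
    (hm2 : 0 ≤ m2) (hm2' : m2 ≤ ⌈(N : ℚ) / (L : ℚ)⌉ - 1)
    (hm3 : 0 ≤ m3) (hm3' : m3 ≤ ⌈(N : ℚ) / (L : ℚ)⌉ - 1)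
    (h12 : m1 ≠ m2) (h13 : m1 ≠ m3) (h23 : m2 ≠ m3)
    (w1 w2 : ZMod N → ℂ) (hw1a : IsAnalytic w1) (hw2a : IsAnalytic w2)
    (hA : dft w1 1 * dft w1 0 ≠ 0)
    (hB : dft w1 ((N / 2 : ℕ) : ZMod N) * dft w2 ((N / 2 : ℕ) : ZMod N) ≠ 0)
    (hC : dft w1 0 * dft w2 ((N / 2 : ℕ) : ZMod N) -
      dft w2 0 * dft w1 ((N / 2 : ℕ) : ZMod N) ≠ 0) :
    ∃ P : MvPolynomial (ZMod N) ℂ, P ≠ 0 ∧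
      ∀ x : ZMod N → ℝ, MvPolynomial.eval (fun n => (x n : ℂ)) P ≠ 0 →
        ∀ zt : ZMod N → ℂ, IsAnalytic zt →
          ‖stft w1 L zt ((N / 2 : ℕ) : ℤ) 0‖ =
            ‖stft w1 L (analyticSignal x) ((N / 2 : ℕ) : ℤ) 0‖ →
          ‖stft w2 L zt ((N / 2 : ℕ) : ℤ) 0‖ =
            ‖stft w2 L (analyticSignal x) ((N / 2 : ℕ) : ℤ) 0‖ →
          (∀ k : ℕ, 1 ≤ k → k ≤ N / 2 - 1 → ∀ m ∈ ({m1, m2, m3} : Set ℤ),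
            ‖stft w1 L zt (k : ℤ) m‖ =
              ‖stft w1 L (analyticSignal x) (k : ℤ) m‖) →
          zt = analyticSignal x ∨ zt = -analyticSignal x := by
  obtain ⟨M, hNM⟩ : ∃ M, N = 2 * M := ⟨N / 2, by omega⟩
  have hM : 2 ≤ M := by have := two_mul_lt_of_three_le_ceil hL0 hceil; omega
  have hN2 : N / 2 = M := by omega
  have : NeZero N := ⟨by omega⟩
  have : Fact (1 < N) := ⟨by omega⟩
  obtain ⟨y₁, rfl⟩ := hw1a
  obtain ⟨y₂, rfl⟩ := hw2a
  simp only [dft_eq_zmodDFT, zmodDFT_analyticSignal, hN2, ZMod.val_one, ZMod.val_zero,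
    ZMod.val_cast_of_lt (show M < N by omega), mul_ne_zero_iff] at hA hB hC
  have hinj := injOn_shiftPhase (N := N) hL0
  have h₁₂ := hinj.ne ⟨hm1, hm1'⟩ ⟨hm2, hm2'⟩ h12
  have h₁₃ := hinj.ne ⟨hm1, hm1'⟩ ⟨hm3, hm3'⟩ h13
  have h₂₃ := hinj.ne ⟨hm2, hm2'⟩ ⟨hm3, hm3'⟩ h23
  refine ⟨genericityPoly N M (analyticHat N y₁) (analyticHat N y₂) (shiftPhase N L m1)
    (shiftPhase N L m2) (shiftPhase N L m3), genericityPoly_ne_zero hNM hM hA.2 hA.1 hB.1 hB.2 hC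
    (norm_shiftPhase _ _) (norm_shiftPhase _ _) (norm_shiftPhase _ _) h₁₂ h₁₃ h₂₃, ?_⟩
  rintro x hx _ ⟨x', rfl⟩ htop₁ htop₂ hmid
  rw [eval_genericityPoly hNM] at hx
  rw [hN2] at htop₁ htop₂ hmid
  exact analyticSignal_eq_or_eq_neg_of_norm_stft_eq hNM hM hA.2 hA.1 hB.1 hC h₁₂ h₁₃ h₂₃ hx
    htop₁ htop₂ hmid

/-- Theorem `3` of the paper: for even `N` and two analytic windows,
a generic analytic signal is determined up to a global sign by `3N/2 − 1` STFT
magnitudes. -/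
theorem stft_pr_analytic_windows (N : ℕ) (hN : 0 < N) (hEven : N % 2 = 0)
    (L : ℤ) (hL0 : 0 < L) (hLN : L < (N : ℤ)) (hceil : 3 ≤ ⌈(N : ℚ) / (L : ℚ)⌉)
    (m1 m2 m3 : ℤ)
    (hm1 : 0 ≤ m1) (hm1' : m1 ≤ ⌈(N : ℚ) / (L : ℚ)⌉ - 1)
    (hm2 : 0 ≤ m2) (hm2' : m2 ≤ ⌈(N : ℚ) / (L : ℚ)⌉ - 1)
    (hm3 : 0 ≤ m3) (hm3' : m3 ≤ ⌈(N : ℚ) / (L : ℚ)⌉ - 1)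
    (h12 : m1 ≠ m2) (h13 : m1 ≠ m3) (h23 : m2 ≠ m3)
    (w1 w2 : ZMod N → ℂ) (hw1a : IsAnalytic w1) (hw2a : IsAnalytic w2)
    (hA : dft w1 1 * dft w1 0 ≠ 0)
    (hB : dft w1 ((N / 2 : ℕ) : ZMod N) * dft w2 ((N / 2 : ℕ) : ZMod N) ≠ 0)
    (hC : dft w1 0 * dft w2 ((N / 2 : ℕ) : ZMod N) -
      dft w2 0 * dft w1 ((N / 2 : ℕ) : ZMod N) ≠ 0) :
    ∃ P : MvPolynomial (ZMod N) ℂ, P ≠ 0 ∧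
      ∀ x : ZMod N → ℝ, MvPolynomial.eval (fun n => (x n : ℂ)) P ≠ 0 →
        ∀ zt : ZMod N → ℂ, IsAnalytic zt →
          ‖stft w1 L zt ((N / 2 : ℕ) : ℤ) 0‖ =
            ‖stft w1 L (analyticSignal x) ((N / 2 : ℕ) : ℤ) 0‖ →
          ‖stft w2 L zt ((N / 2 : ℕ) : ℤ) 0‖ =
            ‖stft w2 L (analyticSignal x) ((N / 2 : ℕ) : ℤ) 0‖ →
          (∀ k : ℕ, 1 ≤ k → k ≤ N / 2 - 1 → ∀ m ∈ ({m1, m2, m3} : Set ℤ),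
            ‖stft w1 L zt (k : ℤ) m‖ =
              ‖stft w1 L (analyticSignal x) (k : ℤ) m‖) →
          zt = analyticSignal x ∨ zt = -analyticSignal x :=
  stft_pr_analytic_windows_general N hEven L hL0 hceil m1 m2 m3 hm1 hm1' hm2 hm2' hm3 hm3' h12 h13
    h23 w1 w2 hw1a hw2a hA hB hC
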